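/- arXiv:1809.00293 — 4 statements merged into one kernel-verified Lean document; each statement's English description precedes it below -/
import Mathlib

section
/- Let μ, q, Λ ∈ ℝ, let T = μ(ůůᵀ − n̊n̊ᵀ) + q·p be the energy-momentum tensor of an EMSF, and define the Ricci tensor by Einstein's field equations R = T + (Λ − (1/2)trace(ηT))·η. Then R = (q − Λ)(ůůᵀ − n̊n̊ᵀ) + (μ + Λ)·p; i.e., the Ricci tensor of an EMSF is obtained from its energy-momentum tensor by the interchange μ ↔ q − Λ, q ↔ μ + Λ. -/
open Matrix

lemma mul_vmv (M : Matrix (Fin 4) (Fin 4) ℝ) (a b : Fin 4 → ℝ) :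
    M * vecMulVec a b = vecMulVec (M.mulVec a) b := by
  ext i j
  simp [mul_apply, vecMulVec_apply, mulVec, dotProduct, Finset.sum_mul, mul_assoc]

lemma trace_vmv (a b : Fin 4 → ℝ) : (vecMulVec a b).trace = a ⬝ᵥ b := by
  simp [trace, vecMulVec_apply, dotProduct, diag]

/-- the Ricci tensor of an EMSF defined by Einstein's field
equations R = T + (Λ − (1/2)tr(ηT))η equals
(q − Λ)(ůůᵀ − n̊n̊ᵀ) + (μ + Λ)p, i.e. it is obtained from the
energy-momentum tensor by the interchange μ ↔ q − Λ, q ↔ μ + Λ. -/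
theorem stmt_7 (μ q Λ : ℝ)
    (η : Matrix (Fin 4) (Fin 4) ℝ) (hη : η = Matrix.diagonal ![-1, 1, 1, 1])
    (u n : Fin 4 → ℝ)
    (huu : u ⬝ᵥ η.mulVec u = -1) (hnn : n ⬝ᵥ η.mulVec n = 1)
    (hun : u ⬝ᵥ η.mulVec n = 0)
    (ul nl : Fin 4 → ℝ) (hul : ul = η.mulVec u) (hnl : nl = η.mulVec n)
    (h p : Matrix (Fin 4) (Fin 4) ℝ)
    (hh : h = η + vecMulVec ul ul) (hp : p = h - vecMulVec nl nl)
    (T R : Matrix (Fin 4) (Fin 4) ℝ)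
    (hT : T = μ • (vecMulVec ul ul - vecMulVec nl nl) + q • p)
    (hR : R = T + (Λ - (1/2) * (η * T).trace) • η) :
    R = (q - Λ) • (vecMulVec ul ul - vecMulVec nl nl) + (μ + Λ) • p := by
  have hη2 : η * η = 1 := by
    subst hη; ext i j
    fin_cases i <;> fin_cases j <;> simp [Matrix.mul_apply, Fin.sum_univ_four]
  have hηul : η.mulVec ul = u := by rw [hul, Matrix.mulVec_mulVec, hη2, Matrix.one_mulVec]
  have hηnl : η.mulVec nl = n := by rw [hnl, Matrix.mulVec_mulVec, hη2, Matrix.one_mulVec]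
  have htru : (η * vecMulVec ul ul).trace = -1 := by
    rw [mul_vmv, trace_vmv, hηul, hul]; exact huu
  have htrn : (η * vecMulVec nl nl).trace = 1 := by
    rw [mul_vmv, trace_vmv, hηnl, hnl]; exact hnn
  have htrη : (η * η).trace = 4 := by rw [hη2]; simp [Fin.sum_univ_four]
  have htrT : (η * T).trace = -2*μ + 2*q := by
    rw [hT, hp, hh]
    simp only [Matrix.mul_add, Matrix.mul_sub, Matrix.mul_smul, trace_add, trace_sub,
      trace_smul, htru, htrn, htrη, smul_eq_mul]
    ring
  rw [hR, htrT, hT, hp, hh]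
  module
end

section
/- Let μ, H : ℝ → ℝ be differentiable with H(s) > 0 for all s, let λ, Λ ∈ ℝ, define R = 2(μ + (1/2)λH² + Λ), and assume the conservation law μ'(s) = (μ(s) − (1/2)λH(s)² + Λ)·H'(s)/H(s) holds for all s. Then (R/H)'(s) = 0 for all s; i.e., the quantity R/H is constant along the magnetic field lines (and, since the same equation holds with the derivative along the fluid flow lines, R/H is also constant along the fluid flow lines). -/
/-! Differentiating the conservation law into `R` gives
`R' = 2(μ' + λHH') = 2(μ + ½λH² + Λ) H'/H = R H'/H`, so `R` and `H` have the same
logarithmic derivative and their quotient is stationary. -/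

theorem HasDerivAt.div_eq_zero_of_logDeriv_eq {𝕜 : Type*} [NontriviallyNormedField 𝕜]
    {f g : 𝕜 → 𝕜} {g' x : 𝕜} (hf : HasDerivAt f (f x * (g' / g x)) x)
    (hg : HasDerivAt g g' x) (hgx : g x ≠ 0) :
    HasDerivAt (fun t => f t / g t) 0 x := by
  refine (hf.div hg hgx).congr_deriv ?_
  field_simp
  ring

theorem hasDerivAt_ricci_of_conservation {μ H : ℝ → ℝ} {lam Λ s : ℝ}
    (hμ : DifferentiableAt ℝ μ s) (hH : DifferentiableAt ℝ H s) (hHs : H s ≠ 0)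
    (hcons : deriv μ s = (μ s - (1/2) * lam * (H s)^2 + Λ) * (deriv H s / H s)) :
    HasDerivAt (fun t => 2 * (μ t + (1/2) * lam * (H t)^2 + Λ))
      (2 * (μ s + (1/2) * lam * (H s)^2 + Λ) * (deriv H s / H s)) s := by
  have hR := ((hμ.hasDerivAt.add ((hH.hasDerivAt.pow 2).const_mul ((1/2) * lam))).add_const
    Λ).const_mul 2
  refine hR.congr_deriv ?_
  rw [hcons]
  field_simp
  ring

/-- with R = 2(μ + (1/2)λH² + Λ) and the conservation law
μ' = (μ − (1/2)λH² + Λ)H'/H, the quantity R/H is constant along the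
magnetic field lines. -/
theorem stmt_14 (μ H : ℝ → ℝ)
    (hμ : Differentiable ℝ μ) (hH : Differentiable ℝ H)
    (hHpos : ∀ s, 0 < H s) (lam Λ : ℝ)
    (R : ℝ → ℝ) (hR : ∀ s, R s = 2 * (μ s + (1/2) * lam * (H s)^2 + Λ))
    (hcons : ∀ s, deriv μ s = (μ s - (1/2) * lam * (H s)^2 + Λ) * (deriv H s / H s)) :
    ∀ s, deriv (fun t => R t / H t) s = 0 := by
  intro s
  obtain rfl : R = fun t => 2 * (μ t + (1/2) * lam * (H t)^2 + Λ) := funext hR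
  exact (HasDerivAt.div_eq_zero_of_logDeriv_eq
    (hasDerivAt_ricci_of_conservation (hμ s) (hH s) (hHpos s).ne' (hcons s))
    (hH s).hasDerivAt (hHpos s).ne').deriv
end

section
/- Let p⊥, H, γ, a, ξ : ℝ → ℝ with p⊥ and H differentiable, H(s) > 0 and ξ(s) > 0 for all s, and let λ, Λ ∈ ℝ. If p⊥'(s) + λH(s)H'(s) = (2γ(s) − a(s))/ξ(s) and (p⊥(s) + (1/2)λH(s)² − Λ)·H'(s)/H(s) = −2(γ(s) + a(s))/ξ(s) for all s, then ((p⊥ + (1/2)λH² − Λ)·H)'(s) = −3H(s)a(s)/ξ(s) for all s. In particular, if a ≡ 0 then the quantity (p⊥ + (1/2)λH² − Λ)H is constant along the magnetic field lines. -/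
/-! Multiplying both (KC.34) and (KC.35) by `H` and adding, the left-hand sides combine to
`(P H)'` with `P = p⊥ + ½λH² − Λ` (since `P' = p⊥' + λHH'`), while on the right the `γ` terms
cancel, leaving `−3Ha/ξ`. -/

theorem hasDerivAt_add_half_mul_sq_sub {f g : ℝ → ℝ} {f' g' x : ℝ} (c d : ℝ)
    (hf : HasDerivAt f f' x) (hg : HasDerivAt g g' x) :
    HasDerivAt (fun t => f t + (1/2) * c * (g t)^2 - d) (f' + c * g x * g') x := by
  refine (hf.add ((hg.pow 2).const_mul ((1/2) * c))).sub_const d |>.congr_deriv ?_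
  push_cast
  ring

theorem hasDerivAt_mul_of_field_equations {P H : ℝ → ℝ} {P' H' γ a ξ x : ℝ}
    (hP : HasDerivAt P P' x) (hH : HasDerivAt H H' x) (hHx : H x ≠ 0)
    (h1 : P' = (2 * γ - a) / ξ) (h2 : P x * (H' / H x) = -(2 * (γ + a) / ξ)) :
    HasDerivAt (fun t => P t * H t) (-(3 * H x * a / ξ)) x := by
  have h2' : P x * H' = -(2 * (γ + a) / ξ) * H x := by
    rw [← h2]
    field_simp
  refine (hP.mul hH).congr_deriv ?_
  rw [h1, h2']
  ring

theorem stmt_15_general (pperp H γ a ξ : ℝ → ℝ)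
    (hpd : Differentiable ℝ pperp) (hHd : Differentiable ℝ H)
    (hHpos : ∀ s, 0 < H s) (lam Λ : ℝ)
    (h1 : ∀ s, deriv pperp s + lam * H s * deriv H s = (2 * γ s - a s) / ξ s)
    (h2 : ∀ s, (pperp s + (1/2) * lam * (H s)^2 - Λ) * (deriv H s / H s) =
      -(2 * (γ s + a s) / ξ s)) :
    (∀ s, deriv (fun t => (pperp t + (1/2) * lam * (H t)^2 - Λ) * H t) s =
      -(3 * H s * a s / ξ s)) ∧
    ((∀ s, a s = 0) → ∀ s t,
      (pperp s + (1/2) * lam * (H s)^2 - Λ) * H s =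
        (pperp t + (1/2) * lam * (H t)^2 - Λ) * H t) := by
  have hderiv : ∀ s, HasDerivAt (fun t => (pperp t + (1/2) * lam * (H t)^2 - Λ) * H t)
      (-(3 * H s * a s / ξ s)) s := fun s =>
    hasDerivAt_mul_of_field_equations
      (hasDerivAt_add_half_mul_sq_sub lam Λ (hpd s).hasDerivAt (hHd s).hasDerivAt)
      (hHd s).hasDerivAt (hHpos s).ne' (h1 s) (h2 s)
  refine ⟨fun s => (hderiv s).deriv, fun ha s t => ?_⟩
  refine is_const_of_deriv_eq_zero (fun u => (hderiv u).differentiableAt) (fun u => ?_) s t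
  rw [(hderiv u).deriv, ha u]
  ring

/-- from the field equations (KC.34)–(KC.35) for an EMSF with a
spacelike CKV, ((p⊥ + (1/2)λH² − Λ)H)' = −3Ha/ξ; in particular if a ≡ 0 the
quantity (p⊥ + (1/2)λH² − Λ)H is constant along the magnetic field lines. -/
theorem stmt_15 (pperp H γ a ξ : ℝ → ℝ)
    (hpd : Differentiable ℝ pperp) (hHd : Differentiable ℝ H)
    (hHpos : ∀ s, 0 < H s) (hξpos : ∀ s, 0 < ξ s) (lam Λ : ℝ)
    (h1 : ∀ s, deriv pperp s + lam * H s * deriv H s = (2 * γ s - a s) / ξ s)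
    (h2 : ∀ s, (pperp s + (1/2) * lam * (H s)^2 - Λ) * (deriv H s / H s) =
      -(2 * (γ s + a s) / ξ s)) :
    (∀ s, deriv (fun t => (pperp t + (1/2) * lam * (H t)^2 - Λ) * H t) s =
      -(3 * H s * a s / ξ s)) ∧
    ((∀ s, a s = 0) → ∀ s t,
      (pperp s + (1/2) * lam * (H s)^2 - Λ) * H s =
        (pperp t + (1/2) * lam * (H t)^2 - Λ) * H t) :=
  stmt_15_general pperp H γ a ξ hpd hHd hHpos lam Λ h1 h2
end

section
/- Let Q, ξ : ℝ → ℝ be differentiable with ξ(t) > 0 for all t, and let θ, p_ψ, λ_ψ : ℝ → ℝ. If Q'(t) = −3(p_ψ(t) + λ_ψ(t))/ξ(t), Q(t)θ(t) = 9p_ψ(t)/ξ(t), and ξ'(t)/ξ(t) = θ(t)/3 for all t, then p_ψ = (1/3)Q·ξ' and λ_ψ = −(1/3)(Q·ξ)'. -/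
/-! The kinematic relation gives `θ = 3 ξ'/ξ`, so the second field equation reads
`3 Q ξ'/ξ = 9 p_ψ/ξ`, which is the formula for `p_ψ`. Multiplying the first field equation
by `ξ` gives `p_ψ + λ_ψ = -(1/3) Q' ξ`; subtracting `p_ψ = (1/3) Q ξ'` and recognising the
Leibniz rule for `(Q ξ)'` gives the formula for `λ_ψ`. -/

lemma pψ_eq_of_field_eq {Q ξ ξ' θ pψ : ℝ} (hξ : ξ ≠ 0) (hQθ : Q * θ = 9 * pψ / ξ)
    (hkin : ξ' / ξ = θ / 3) : pψ = 1 / 3 * Q * ξ' := by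
  have hθ : θ = 3 * ξ' / ξ := by
    field_simp at hkin ⊢
    linarith
  rw [hθ] at hQθ
  field_simp at hQθ
  linarith

lemma lψ_eq_of_field_eq {Q Q' ξ ξ' pψ lψ : ℝ} (hξ : ξ ≠ 0) (hQ' : Q' = -(3 * (pψ + lψ) / ξ))
    (hpψ : pψ = 1 / 3 * Q * ξ') : lψ = -(1 / 3) * (Q' * ξ + Q * ξ') := by
  rw [hQ']
  field_simp
  linear_combination -3 * hpψ

/-- from the field equations Q' = −3(p_ψ + λ_ψ)/ξ,
Qθ = 9p_ψ/ξ and the CKV kinematics ξ'/ξ = θ/3 it follows that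
p_ψ = (1/3)Qξ' and λ_ψ = −(1/3)(Qξ)'. -/
theorem stmt_18 (Q ξ θ pψ lψ : ℝ → ℝ)
    (hQ : Differentiable ℝ Q) (hξ : Differentiable ℝ ξ)
    (hξpos : ∀ t, 0 < ξ t)
    (h1 : ∀ t, deriv Q t = -(3 * (pψ t + lψ t) / ξ t))
    (h2 : ∀ t, Q t * θ t = 9 * pψ t / ξ t)
    (h3 : ∀ t, deriv ξ t / ξ t = θ t / 3) :
    ∀ t, pψ t = (1/3) * Q t * deriv ξ t ∧
      lψ t = -(1/3) * deriv (fun s => Q s * ξ s) t := by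
  intro t
  have hpψ := pψ_eq_of_field_eq (hξpos t).ne' (h2 t) (h3 t)
  refine ⟨hpψ, ?_⟩
  rw [deriv_fun_mul (hQ t) (hξ t)]
  exact lψ_eq_of_field_eq (hξpos t).ne' (h1 t) hpψ
end
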